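/- For N ≥ 1 and M ≥ 2, the graph G(N, M) is strongly connected if and only if M ≥ N + 1. -/

import Mathlib

/-- Edge relation of the configuration graph `G(N, M)`:
`(f, g)` is an edge iff for all `k`, `g k ≠ f k` iff `k` is the largest index in its `f`-fiber. -/
def RoomEdge (N M : ℕ) (f g : Fin N → Fin M) : Prop :=
  ∀ k : Fin N, g k ≠ f k ↔ ∀ j : Fin N, f j = f k → j ≤ k

/-- A directed path of length `n` from `f` to `g` in `G(N, M)`. -/
def RoomPath (N M : ℕ) (f g : Fin N → Fin M) (n : ℕ) : Prop :=
  ∃ p : ℕ → Fin N → Fin M, p 0 = f ∧ p n = g ∧ ∀ i < n, RoomEdge N M (p i) (p (i + 1))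

/-- `V_s`: configurations injective on the `M` largest indices `(N−M, N]`
(0-indexed: indices `k` with `N - M ≤ k`). -/
def RoomVs (N M : ℕ) (f : Fin N → Fin M) : Prop :=
  ∀ j k : Fin N, N - M ≤ (j : ℕ) → N - M ≤ (k : ℕ) → f j = f k → j = k

/-- `V_c`: configurations constant on the `M` largest indices `(N−M, N]`. -/
def RoomVc (N M : ℕ) (f : Fin N → Fin M) : Prop :=
  ∀ j k : Fin N, N - M ≤ (j : ℕ) → N - M ≤ (k : ℕ) → f j = f k

/-!
From an injective `F` the edges go exactly to the `g` with `g k ≠ F k` for all `k`. Since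
`M > N`, some translate `F + t` avoids a given `g` pointwise (at most `N` values of `t` are
excluded), and `F` reaches `F + t` in at most one step; so an injective `F` reaches every vertex.
Conversely every `f` reaches an injective vertex: moving the fiber-maxima of `f` to pairwise
distinct values not taken by the other indices (possible by Hall's theorem when `M > N`) keeps
them fiber-maxima and creates a new one in every fiber of size at least two.

When `M ≤ N` a constant configuration has no predecessor: a predecessor must avoid the constant
value and then, as every index changes, be injective.
-/

open Finset Function Relation

theorem Finset.exists_injective_forall_mem_of_card_le {ι α : Type*} [Fintype ι] [DecidableEq α]
    (t : ι → Finset α) (ht : ∀ i, Fintype.card ι ≤ #(t i)) :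
    ∃ f : ι → α, Injective f ∧ ∀ i, f i ∈ t i :=
  (all_card_le_biUnion_card_iff_exists_injective t).1 fun s => by
    rcases s.eq_empty_or_nonempty with rfl | ⟨i, hi⟩
    · simp
    · exact (card_le_univ s).trans ((ht i).trans (card_le_card (subset_biUnion_of_mem t hi)))

theorem exists_forall_add_ne {ι α : Type*} [Fintype ι] [AddGroup α] [Fintype α]
    (F g : ι → α) (h : Fintype.card ι < Fintype.card α) : ∃ t, ∀ k, F k + t ≠ g k := by
  classical
  obtain ⟨t, -, ht⟩ := exists_mem_notMem_of_card_lt_card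
    (s := univ.image fun k => -F k + g k) (t := univ) (card_image_le.trans_lt h)
  refine ⟨t, fun k hk => ht (mem_image.2 ⟨k, mem_univ k, ?_⟩)⟩
  rw [← hk, neg_add_cancel_left]

section FiberMax

variable {ι α : Type*} [LinearOrder ι] {f : ι → α}

def IsFiberMax (f : ι → α) (k : ι) : Prop :=
  ∀ j, f j = f k → j ≤ k

theorem isFiberMax_of_injective (hf : Injective f) (k : ι) : IsFiberMax f k :=
  fun _ h => (hf h).le

theorem injective_of_forall_isFiberMax (hf : ∀ k, IsFiberMax f k) : Injective f :=
  fun a b h => le_antisymm (hf b a h) (hf a b h.symm)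

theorem exists_isFiberMax [Fintype ι] (f : ι → α) (k : ι) :
    ∃ j, f j = f k ∧ IsFiberMax f j := by
  classical
  obtain ⟨j, hj, hmax⟩ := (univ.filter fun j => f j = f k).exists_max_image id ⟨k, by simp⟩
  rw [mem_filter] at hj
  exact ⟨j, hj.2, fun i hi => hmax i (mem_filter.2 ⟨mem_univ i, hi.trans hj.2⟩)⟩

end FiberMax

section RoomEdge

variable {N M : ℕ} {f g : Fin N → Fin M}

theorem roomEdge_of_injective (hf : Injective f) (hg : ∀ k, g k ≠ f k) : RoomEdge N M f g :=
  fun k => iff_of_true (hg k) (isFiberMax_of_injective hf k)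

theorem add_one_le_of_roomEdge_const {c : Fin M} (h : RoomEdge N M f fun _ => c) : N + 1 ≤ M := by
  have hne : ∀ k, f k ≠ c := by
    intro k hk
    obtain ⟨j, hjk, hj⟩ := exists_isFiberMax f k
    exact (h j).2 hj (hjk.trans hk).symm
  have hinj : Injective f :=
    injective_of_forall_isFiberMax fun k => (h k).1 fun hk => hne k hk.symm
  simpa using Fintype.card_lt_of_injective_of_notMem f hinj (b := c) fun ⟨k, hk⟩ => hne k hk

theorem exists_roomEdge_ssubset_not_isFiberMax (hM : N < M) (hf : ¬Injective f) :
    ∃ g, RoomEdge N M f g ∧ {k | ¬IsFiberMax g k} ⊂ {k | ¬IsFiberMax f k} := by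
  classical
  set K := univ.image fun k : {k // ¬IsFiberMax f k} => f k
  have hcard (k : {k // IsFiberMax f k}) :
      Fintype.card {k // IsFiberMax f k} ≤ #(Kᶜ.erase (f k)) := by
    have h₁ := Fintype.card_subtype_compl (IsFiberMax f)
    have h₂ : #K ≤ Fintype.card {k // ¬IsFiberMax f k} := card_image_le.trans_eq card_univ
    have h₃ := pred_card_le_card_erase (s := Kᶜ) (a := f k)
    have h₄ := Fintype.card_subtype_le (IsFiberMax f)
    rw [card_compl, Fintype.card_fin] at h₃
    rw [Fintype.card_fin] at h₁ h₄
    omega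
  obtain ⟨h, hinj, hmem⟩ := exists_injective_forall_mem_of_card_le _ hcard
  let g k := if hk : IsFiberMax f k then h ⟨k, hk⟩ else f k
  have fresh (k : Fin N) (hk : IsFiberMax f k) (j : Fin N) (hj : g j = g k) : j = k := by
    simp only [g, dif_pos hk] at hj
    by_cases hj' : IsFiberMax f j
    · rw [dif_pos hj'] at hj
      exact congrArg Subtype.val (hinj hj)
    · rw [dif_neg hj'] at hj
      have hK : f j ∈ K := mem_image_of_mem (fun k : {k // ¬IsFiberMax f k} => f k)
        (mem_univ ⟨j, hj'⟩)
      exact absurd (hj ▸ hK) (mem_compl.1 (mem_erase.1 (hmem ⟨k, hk⟩)).2)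
  refine ⟨g, fun k => show g k ≠ f k ↔ IsFiberMax f k from ?_, ?_⟩
  · by_cases hk : IsFiberMax f k
    · simpa [g, hk] using (mem_erase.1 (hmem ⟨k, hk⟩)).1
    · simp [g, hk]
  · have hsub : {k | ¬IsFiberMax g k} ⊆ {k | ¬IsFiberMax f k} := fun i hi hi' =>
      absurd (fun l hl => (fresh i hi' l hl).le) hi
    obtain ⟨k, hk⟩ := not_forall.1 (mt injective_of_forall_isFiberMax hf)
    obtain ⟨j, hjk, hj⟩ := exists_isFiberMax g k
    refine (Set.ssubset_iff_of_subset hsub).2 ⟨j, fun hj' => hk ?_, fun h => h hj⟩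
    exact fresh j hj' k hjk.symm ▸ hj'

theorem exists_injective_reflTransGen (hM : N < M) (f : Fin N → Fin M) :
    ∃ F, Injective F ∧ ReflTransGen (RoomEdge N M) f F := by
  by_cases hf : Injective f
  · exact ⟨f, hf, .refl⟩
  obtain ⟨g, hfg, hlt⟩ := exists_roomEdge_ssubset_not_isFiberMax hM hf
  obtain ⟨F, hF, hgF⟩ := exists_injective_reflTransGen hM g
  exact ⟨F, hF, .head hfg hgF⟩
termination_by {k | ¬IsFiberMax f k}.ncard
decreasing_by exact Set.ncard_lt_ncard hlt (Set.toFinite _)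

theorem reflTransGen_add_of_injective [NeZero M] (hf : Injective f) (t : Fin M) :
    ReflTransGen (RoomEdge N M) f fun k => f k + t := by
  rcases eq_or_ne t 0 with rfl | ht
  · simpa using ReflTransGen.refl
  · exact .single (roomEdge_of_injective hf fun k => by simpa using ht)

theorem reflTransGen_of_injective (hM : N < M) (hf : Injective f) (g : Fin N → Fin M) :
    ReflTransGen (RoomEdge N M) f g := by
  have : NeZero M := ⟨by omega⟩
  obtain ⟨t, ht⟩ := exists_forall_add_ne f g (by simpa using hM)
  exact (reflTransGen_add_of_injective hf t).tail
    (roomEdge_of_injective ((add_left_injective t).comp hf) fun k => (ht k).symm)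

end RoomEdge

theorem strongly_connected_iff_general (N M : ℕ) (hM : 2 ≤ M) :
    (∀ f g : Fin N → Fin M, Relation.ReflTransGen (RoomEdge N M) f g) ↔ N + 1 ≤ M := by
  refine ⟨fun hconn => ?_, fun hNM f g => ?_⟩
  · by_contra! hMN
    rcases (hconn (fun _ => ⟨1, by omega⟩) (fun _ => ⟨0, by omega⟩)).cases_tail
      with heq | ⟨f, -, hf⟩
    · simpa using congrFun heq ⟨0, by omega⟩
    · exact hMN.not_ge (add_one_le_of_roomEdge_const hf)
  · obtain ⟨F, hF, hfF⟩ := exists_injective_reflTransGen hNM f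
    exact hfF.trans (reflTransGen_of_injective hNM hF g)

theorem strongly_connected_iff (N M : ℕ) (hN : 1 ≤ N) (hM : 2 ≤ M) :
    (∀ f g : Fin N → Fin M, Relation.ReflTransGen (RoomEdge N M) f g) ↔ N + 1 ≤ M :=
  strongly_connected_iff_general N M hM
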